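/- No ordinal κ satisfies reflection for first-order formulas with third-order parameters: specifically, let φ(X^{(3)}) be the first-order assertion (with third-order parameter X^{(3)}) that every element of X^{(3)} is a bounded subset of the class of ordinals, and let U^{(3)} = {{ξ : ξ < α} : α an ordinal < κ} ∈ V_{κ+2}. Then φ^κ(U^{(3)}) holds, but for every β < κ, φ^β(U^{(3),β}) fails, since U^{(3),β} contains the set {ξ : ξ < β}, which is unbounded in On ∩ V_β. Hence there is no κ such that whenever φ^κ(X^{(3)}) holds for such a sentence φ and parameter X^{(3)} ∈ V_{κ+2}, then φ^β(X^{(3),β}) holds for some β < κ. -/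

import Mathlib

noncomputable def Vset (o : Ordinal.{0}) : ZFSet.{0} :=
  ZFSet.sUnion (ZFSet.range fun i : o.ToType =>
    ZFSet.powerset (Vset ((Ordinal.ToType.mk (o := o)).symm i).val))
termination_by o
decreasing_by exact ((Ordinal.ToType.mk (o := o)).symm i).2

/-- The von Neumann ordinal `{ξ : ξ < o}` corresponding to the ordinal `o`. -/
noncomputable def ordToZF (o : Ordinal.{0}) : ZFSet.{0} :=
  ZFSet.range fun i : o.ToType =>
    ordToZF ((Ordinal.ToType.mk (o := o)).symm i).val
termination_by o
decreasing_by exact ((Ordinal.ToType.mk (o := o)).symm i).2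

/-- The relativisation `φ^θ(X)` to `V_θ` of the first-order assertion
`φ(X^{(3)})` (with third-order parameter `X`) stating that every element of `X` is a
bounded subset of the class of ordinals: every `Y ∈ X` is included in some von Neumann
ordinal `{ξ : ξ < b}` with `b` an ordinal of `V_θ`, i.e. `b < θ`. -/
noncomputable def phiAt (θ : Ordinal.{0}) (X : ZFSet.{0}) : Prop :=
  ∀ Y ∈ X, ∃ b < θ, ∀ ξ ∈ Y, ξ ∈ ordToZF b

/-- The third-order parameter `U^{(3)} = {{ξ : ξ < α} : α < κ}`. -/
noncomputable def Uset (κ : Ordinal.{0}) : ZFSet.{0} :=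
  ZFSet.sep (fun Y => ∃ α < κ, Y = ordToZF α) (Vset (κ + 1))

/-- The relativisation `X^{(3),β} = {Y^{(2),β} : Y ∈ X} = {Y ∩ V_β : Y ∈ X}` of a
third-order parameter `X` to the level `V_β`. -/
noncomputable def rel3 (β : Ordinal.{0}) (X : ZFSet.{0}) : ZFSet.{0} :=
  ZFSet.sep (fun d => ∃ Y ∈ X, d = Y ∩ Vset β) (ZFSet.powerset (Vset β))

/-!
`φ^κ(U^{(3)})` holds because each `α < κ` bounds `{ξ : ξ < α}` itself. For `β < κ`, the
relativised parameter `U^{(3),β}` still contains `{ξ : ξ < β}`, which lies inside `V_β`;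
a bound `b < β` for it would give `b ∈ b`.
-/

lemma mem_ordToZF {x : ZFSet.{0}} {o : Ordinal.{0}} :
    x ∈ ordToZF o ↔ ∃ p < o, x = ordToZF p := by
  rw [ordToZF, ZFSet.mem_range]
  constructor
  · rintro ⟨i, rfl⟩
    exact ⟨_, ((Ordinal.ToType.mk (o := o)).symm i).2, rfl⟩
  · rintro ⟨p, hp, rfl⟩
    exact ⟨Ordinal.ToType.mk ⟨p, hp⟩, by simp⟩

lemma ordToZF_mem_ordToZF {p o : Ordinal.{0}} (h : p < o) : ordToZF p ∈ ordToZF o :=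
  mem_ordToZF.2 ⟨p, h, rfl⟩

lemma mem_Vset {x : ZFSet.{0}} {o : Ordinal.{0}} :
    x ∈ Vset o ↔ ∃ p < o, x ⊆ Vset p := by
  rw [Vset, ZFSet.mem_sUnion]
  constructor
  · rintro ⟨_, hS, hx⟩
    obtain ⟨i, rfl⟩ := ZFSet.mem_range.1 hS
    exact ⟨_, ((Ordinal.ToType.mk (o := o)).symm i).2, ZFSet.mem_powerset.1 hx⟩
  · rintro ⟨p, hp, hx⟩
    exact ⟨_, ZFSet.mem_range.2 ⟨Ordinal.ToType.mk ⟨p, hp⟩, by simp⟩, ZFSet.mem_powerset.2 hx⟩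

lemma Vset_mono {p q : Ordinal.{0}} (h : p ≤ q) : Vset p ⊆ Vset q := fun _ hx =>
  let ⟨r, hr, hx⟩ := mem_Vset.1 hx
  mem_Vset.2 ⟨r, hr.trans_le h, hx⟩

lemma ordToZF_subset_Vset (o : Ordinal.{0}) : ordToZF o ⊆ Vset o := by
  induction o using WellFoundedLT.induction with
  | _ o ih =>
    intro x hx
    obtain ⟨p, hp, rfl⟩ := mem_ordToZF.1 hx
    exact mem_Vset.2 ⟨p, hp, ih p hp⟩

lemma ordToZF_mem_Vset_succ (o : Ordinal.{0}) : ordToZF o ∈ Vset (o + 1) :=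
  mem_Vset.2 ⟨o, Order.lt_add_one_iff.2 le_rfl, ordToZF_subset_Vset o⟩

lemma mem_Uset {Y : ZFSet.{0}} {κ : Ordinal.{0}} : Y ∈ Uset κ ↔ ∃ α < κ, Y = ordToZF α := by
  rw [Uset, ZFSet.mem_sep, and_iff_right_iff_imp]
  rintro ⟨α, hα, rfl⟩
  exact Vset_mono (add_le_add_left hα.le 1) (ordToZF_mem_Vset_succ α)

lemma Uset_mem_Vset (κ : Ordinal.{0}) : Uset κ ∈ Vset (κ + 2) :=
  mem_Vset.2 ⟨κ + 1, by gcongr; exact one_lt_two, fun _ hY => (ZFSet.mem_sep.1 hY).1⟩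

lemma phiAt_Uset (κ : Ordinal.{0}) : phiAt κ (Uset κ) := by
  intro Y hY
  obtain ⟨α, hα, rfl⟩ := mem_Uset.1 hY
  exact ⟨α, hα, fun _ => id⟩

lemma mem_rel3_of_subset {β : Ordinal.{0}} {X Y : ZFSet.{0}} (hY : Y ∈ X) (hYβ : Y ⊆ Vset β) :
    Y ∈ rel3 β X := by
  rw [rel3, ZFSet.mem_sep, ZFSet.mem_powerset]
  exact ⟨hYβ, Y, hY, (ZFSet.inter_eq_left_of_subset hYβ).symm⟩

lemma not_phiAt_of_ordToZF_mem {β : Ordinal.{0}} {X : ZFSet.{0}} (h : ordToZF β ∈ X) :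
    ¬ phiAt β X := fun hφ =>
  let ⟨_, hb, hbound⟩ := hφ _ h
  ZFSet.mem_irrefl _ (hbound _ (ordToZF_mem_ordToZF hb))

lemma not_phiAt_rel3_Uset {β κ : Ordinal.{0}} (hβ : β < κ) : ¬ phiAt β (rel3 β (Uset κ)) :=
  not_phiAt_of_ordToZF_mem <|
    mem_rel3_of_subset (mem_Uset.2 ⟨β, hβ, rfl⟩) (ordToZF_subset_Vset β)

/-- No ordinal `κ` satisfies reflection for first-order formulas with third-order
parameters: `U^{(3)} ∈ V_{κ+2}` and `φ^κ(U^{(3)})` holds, but `φ^β(U^{(3),β})` fails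
for every `β < κ`; hence no `κ` reflects every such parameter `X^{(3)} ∈ V_{κ+2}`. -/
theorem stmt6 (κ : Ordinal.{0}) :
    Uset κ ∈ Vset (κ + 2) ∧
    phiAt κ (Uset κ) ∧
    (∀ β < κ, ¬ phiAt β (rel3 β (Uset κ))) ∧
    ¬ (∀ X ∈ Vset (κ + 2), phiAt κ X → ∃ β < κ, phiAt β (rel3 β X)) := by
  refine ⟨Uset_mem_Vset κ, phiAt_Uset κ, fun _ => not_phiAt_rel3_Uset, fun hrefl => ?_⟩
  obtain ⟨β, hβ, hφ⟩ := hrefl _ (Uset_mem_Vset κ) (phiAt_Uset κ)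
  exact not_phiAt_rel3_Uset hβ hφ
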